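/- Let f : A → A be a continuous map of degree d with |d| > 1. If for every integer k ≥ 1 every lift of fᵏ has a fixed point, then f is complete: for every k ≥ 1, the map fᵏ has exactly |dᵏ − 1| Nielsen classes of fixed points. -/

import Mathlib

open Set Filter Topology

noncomputable section

/-- The open annulus `A = S¹ × (0,1)`. -/
abbrev Ann : Type := Circle × (Set.Ioo (0:ℝ) 1)

/-- The universal cover `Ã = ℝ × (0,1)`. -/
abbrev AnnTil : Type := ℝ × (Set.Ioo (0:ℝ) 1)

/-- The covering projection `π(x,y) = (exp(2πix), y)`. -/
def pr : AnnTil → Ann := fun z => (Circle.exp (2 * Real.pi * z.1), z.2)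

/-- Translation by an integer in the first coordinate: `z + k`. -/
def tr (z : AnnTil) (k : ℤ) : AnnTil := (z.1 + k, z.2)

/-- `F` is a lift of `f`. -/
def IsLift (f : Ann → Ann) (F : AnnTil → AnnTil) : Prop :=
  Continuous F ∧ pr ∘ F = f ∘ pr

/-- `f` has degree `d`: some lift satisfies `F(z+1) = F(z) + d`. -/
def HasDegree (f : Ann → Ann) (d : ℤ) : Prop :=
  ∃ F : AnnTil → AnnTil, IsLift f F ∧ ∀ z, F (tr z 1) = tr (F z) d

/-- A subset of the annulus is essential if it is not contained in any
connected, simply connected open subset. -/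
def IsEssential (K : Set Ann) : Prop :=
  ¬ ∃ U : Set Ann, IsOpen U ∧ IsConnected U ∧ SimplyConnectedSpace U ∧ K ⊆ U

/-- Nielsen equivalence of fixed points `p`, `q` of `g`: there is a path `γ`
from `p` to `q` homotopic (rel endpoints) to `g ∘ γ`. -/
def NielsenEquiv (g : Ann → Ann) (p q : Ann) : Prop :=
  ∃ (hg : Continuous g) (hp : g p = p) (hq : g q = q) (γ : Path p q),
    γ.Homotopic ((γ.map hg).cast hp.symm hq.symm)

/-- `g` has exactly `N` Nielsen classes of fixed points. -/
def HasExactlyNielsenClasses (g : Ann → Ann) (N : ℕ) : Prop :=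
  ∃ S : Finset Ann, S.card = N ∧ (∀ p ∈ S, g p = p) ∧
    (∀ p ∈ S, ∀ q ∈ S, p ≠ q → ¬ NielsenEquiv g p q) ∧
    (∀ p, g p = p → ∃ q ∈ S, NielsenEquiv g p q)

/-- `Fill K`: the union of `K` with the connected components of its
complement whose closure is compact. -/
def Fill (K : Set Ann) : Set Ann :=
  K ∪ {x | x ∈ Kᶜ ∧ IsCompact (closure (connectedComponentIn Kᶜ x))}


/-!
Fix a lift `G` of `g = fᵏ` with `G (z + m) = G z + m e`, `e = dᵏ`. A fixed point of `g` is the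
projection of a fixed point of one of the lifts `G + j`, and shifting it by `n` turns it into a
fixed point of `G + (j + n (1 - e))`; so only `j mod (e - 1)` is determined by the fixed point.
Fixed points of a common lift are Nielsen equivalent (the cover is simply connected), and by
homotopy lifting Nielsen equivalent fixed points are projections of fixed points of a common lift.
Hence the Nielsen classes correspond to the residues of `j` modulo `e - 1`, and all `|e - 1|`
of them are realised because every lift `G + j` has a fixed point.
-/

open Real unitInterval

lemma circleExp_two_pi_mul_eq_iff {x y : ℝ} :
    Circle.exp (2 * π * x) = Circle.exp (2 * π * y) ↔ ∃ m : ℤ, x = y + m := by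
  rw [Circle.exp_eq_exp]
  refine exists_congr fun m => ⟨fun h => ?_, fun h => by rw [h]; ring⟩
  nlinarith [Real.pi_pos]

lemma isCoveringMap_circleExp_two_pi_mul : IsCoveringMap fun x : ℝ => Circle.exp (2 * π * x) :=
  Circle.isCoveringMap_exp.comp_homeomorph (Homeomorph.mulLeft₀ (2 * π) (by positivity))

lemma tr_tr (z : AnnTil) (a b : ℤ) : tr (tr z a) b = tr z (a + b) := by
  simp only [tr, Int.cast_add, add_assoc]

lemma tr_zero (z : AnnTil) : tr z 0 = z := by
  simp [tr]

lemma tr_right_injective (z : AnnTil) : Function.Injective (tr z) := by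
  intro a b h
  simpa [tr] using congrArg Prod.fst h

lemma continuous_pr : Continuous pr := by
  unfold pr; fun_prop

lemma pr_eq_pr_iff {w z : AnnTil} : pr w = pr z ↔ ∃ m : ℤ, w = tr z m := by
  simp only [pr, tr, Prod.ext_iff, circleExp_two_pi_mul_eq_iff]
  tauto

lemma pr_tr (z : AnnTil) (k : ℤ) : pr (tr z k) = pr z :=
  pr_eq_pr_iff.mpr ⟨k, rfl⟩

lemma pr_surjective : Function.Surjective pr := by
  rintro ⟨u, y⟩
  refine ⟨(Complex.arg u / (2 * π), y), ?_⟩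
  simp only [pr, Prod.mk.injEq, and_true]
  rw [mul_div_cancel₀ _ (by positivity), Circle.exp_arg]

namespace IsLift

variable {f : Ann → Ann} {F : AnnTil → AnnTil}

lemma pr_apply (h : IsLift f F) (z : AnnTil) : pr (F z) = f (pr z) :=
  congrFun h.2 z

lemma iterate (h : IsLift f F) (k : ℕ) : IsLift f^[k] F^[k] :=
  ⟨h.1.iterate k, (Function.Semiconj.iterate_right (f := pr) h.pr_apply k).comp_eq⟩

lemma tr_right (h : IsLift f F) (j : ℤ) : IsLift f fun z => tr (F z) j := by
  refine ⟨?_, funext fun z => (pr_tr _ _).trans (h.pr_apply z)⟩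
  have := h.1
  unfold tr; fun_prop

end IsLift

section Degree

variable {F : AnnTil → AnnTil} {d : ℤ}

lemma map_tr_neg_one (h : ∀ z, F (tr z 1) = tr (F z) d) (z : AnnTil) :
    F (tr z (-1)) = tr (F z) (-d) := by
  have h' := h (tr z (-1))
  rw [tr_tr, neg_add_cancel, tr_zero] at h'
  rw [h', tr_tr, add_neg_cancel, tr_zero]

lemma map_tr_of_map_tr_one (h : ∀ z, F (tr z 1) = tr (F z) d) (z : AnnTil) (m : ℤ) :
    F (tr z m) = tr (F z) (m * d) := by
  induction m using Int.induction_on with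
  | zero => simp [tr_zero]
  | succ m ih =>
    rw [← tr_tr, h, ih, tr_tr]
    congr 1; ring
  | pred m ih =>
    rw [sub_eq_add_neg, ← tr_tr, map_tr_neg_one h, ih, tr_tr]
    congr 1; ring

lemma iterate_map_tr (h : ∀ z m, F (tr z m) = tr (F z) (m * d)) (k : ℕ) (z : AnnTil) (m : ℤ) :
    F^[k] (tr z m) = tr (F^[k] z) (m * d ^ k) := by
  induction k with
  | zero => simp
  | succ k ih => rw [Function.iterate_succ_apply', ih, h, Function.iterate_succ_apply', pow_succ,
      mul_assoc]

end Degree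

instance : ContractibleSpace (Ioo (0 : ℝ) 1) :=
  (convex_Ioo 0 1).contractibleSpace (nonempty_Ioo.mpr zero_lt_one)

section Nielsen

variable {g : Ann → Ann} {G : AnnTil → AnnTil}

lemma nielsenEquiv_refl (hg : Continuous g) {q : Ann} (hq : g q = q) : NielsenEquiv g q q :=
  ⟨hg, hq, hq, Path.refl q, by rw [show ((Path.refl q).map hg).cast hq.symm hq.symm = Path.refl q
    from Path.ext (funext fun _ => hq)]⟩

lemma nielsenEquiv_pr_of_isFixedPt (hg : Continuous g) (hG : IsLift g G) {w w' : AnnTil}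
    (hw : G w = w) (hw' : G w' = w') : NielsenEquiv g (pr w) (pr w') := by
  have hp : g (pr w) = pr w := by rw [← hG.pr_apply, hw]
  have hq : g (pr w') = pr w' := by rw [← hG.pr_apply, hw']
  let Γ : Path w w' := PathConnectedSpace.somePath w w'
  let GΓ : Path w w' := (Γ.map hG.1).cast hw.symm hw'.symm
  refine ⟨hg, hp, hq, Γ.map continuous_pr, ?_⟩
  have hGΓ : ((Γ.map continuous_pr).map hg).cast hp.symm hq.symm = GΓ.map continuous_pr :=
    Path.ext (funext fun t => (hG.pr_apply (Γ t)).symm)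
  rw [hGΓ]
  exact (SimplyConnectedSpace.paths_homotopic Γ GΓ).map ⟨pr, continuous_pr⟩

/- Only the circle coordinate of `γ` needs lifting. The lift `Λ` and the first coordinate of
`G ∘ Γ` lift the homotopic paths `γ` and `g ∘ γ` from the same point, so they end at the same
point. -/
lemma exists_pr_eq_isFixedPt_of_nielsenEquiv (hG : IsLift g G) {w : AnnTil} (hw : G w = w)
    {q : Ann} (h : NielsenEquiv g (pr w) q) :
    ∃ z, pr z = q ∧ G z = z := by
  obtain ⟨hg, hp, hq, γ, ⟨H⟩⟩ := h
  have cov := isCoveringMap_circleExp_two_pi_mul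
  obtain ⟨Λ, hΛ, hΛ0⟩ := cov.exists_path_lifts ⟨fun t => (γ t).1, by fun_prop⟩ w.1
    (congrArg Prod.fst γ.source)
  let Γ : C(I, AnnTil) := ⟨fun t => (Λ t, (γ t).2), by fun_prop⟩
  have hΓ : ∀ t, pr (Γ t) = γ t := fun t => Prod.ext (congrFun hΛ t) rfl
  have hΓ0 : Γ 0 = w := Prod.ext hΛ0 (congrArg Prod.snd γ.source :)
  have hΓ1 : pr (Γ 1) = q := (hΓ 1).trans γ.target
  let GΓ₁ : C(I, ℝ) := ⟨fun t => (G (Γ t)).1, by have := hG.1; fun_prop⟩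
  have hrel : Λ.HomotopicRel GΓ₁ {0, 1} := by
    refine (cov.homotopicRel_iff_comp ⟨0, by simp, by simp [GΓ₁, hΓ0, hw, ← hΛ0]⟩).mpr ?_
    have e₀ : ContinuousMap.comp ⟨_, cov.continuous⟩ Λ =
        ContinuousMap.fst.comp γ.toContinuousMap :=
      ContinuousMap.ext fun t => (congrFun hΛ t :)
    have e₁ : ContinuousMap.comp ⟨_, cov.continuous⟩ GΓ₁ =
        ContinuousMap.fst.comp ((γ.map hg).cast hp.symm hq.symm).toContinuousMap :=
      ContinuousMap.ext fun t =>
        (congrArg Prod.fst ((hG.pr_apply (Γ t)).trans (congrArg g (hΓ t))) :)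
    rw [e₀, e₁]
    exact ⟨H.compContinuousMap ContinuousMap.fst⟩
  have h1 : (1 : I) ∈ ({0, 1} : Set I) := by simp
  refine ⟨Γ 1, hΓ1, Prod.ext ?_ ?_⟩
  · exact ((hrel.some.eq_fst 0 h1).symm.trans (hrel.some.eq_snd 0 h1)).symm
  · exact (congrArg Prod.snd (show pr (G (Γ 1)) = pr (Γ 1) by rw [hG.pr_apply, hΓ1, hq]) :)

end Nielsen

lemma Int.natCast_eq_of_dvd_sub_of_lt_natAbs {n : ℤ} {i j : ℕ} (hi : i < n.natAbs)
    (hj : j < n.natAbs) (h : n ∣ (i : ℤ) - j) : i = j := by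
  have := Int.eq_zero_of_abs_lt_dvd (Int.natAbs_dvd.mpr h) (abs_lt.mpr ⟨by omega, by omega⟩)
  omega

section Classes

variable {g : Ann → Ann} {G : AnnTil → AnnTil} {e : ℤ}

lemma dvd_sub_of_pr_eq (hdeg : ∀ z m, G (tr z m) = tr (G z) (m * e)) {i j : ℤ} {z z' : AnnTil}
    (hz : tr (G z) i = z) (hz' : tr (G z') j = z') (h : pr z = pr z') : e - 1 ∣ i - j := by
  obtain ⟨m, rfl⟩ := pr_eq_pr_iff.mp h
  have hz'm : tr z' m = tr (G z') (j + m) := by rw [← tr_tr, hz']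
  rw [hdeg, tr_tr, hz'm] at hz
  have := tr_right_injective _ hz
  exact ⟨-m, by linarith⟩

lemma dvd_sub_of_nielsenEquiv (hG : IsLift g G) (hdeg : ∀ z m, G (tr z m) = tr (G z) (m * e))
    {i j : ℤ} {z z' : AnnTil} (hz : tr (G z) i = z) (hz' : tr (G z') j = z')
    (h : NielsenEquiv g (pr z) (pr z')) : e - 1 ∣ i - j := by
  obtain ⟨y, hy, hyi⟩ := exists_pr_eq_isFixedPt_of_nielsenEquiv (hG.tr_right i) hz h
  exact dvd_sub_of_pr_eq hdeg hyi hz' hy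

lemma exists_lt_natAbs_isFixedPt_tr (hG : IsLift g G)
    (hdeg : ∀ z m, G (tr z m) = tr (G z) (m * e)) (he : e ≠ 1) {q : Ann} (hq : g q = q) :
    ∃ r : ℕ, r < (e - 1).natAbs ∧ ∃ z, pr z = q ∧ tr (G z) r = z := by
  obtain ⟨z, rfl⟩ := pr_surjective q
  obtain ⟨m, hm⟩ := pr_eq_pr_iff.mp ((hG.pr_apply z).trans hq)
  -- `G (z + n) = z + (m + n e)`, so `z + n` is fixed by `G + r` iff `r = -m - n (e - 1)`.
  have he' : e - 1 ≠ 0 := sub_ne_zero.mpr he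
  have hr := Int.emod_lt (-m) he'
  have hr0 := Int.emod_nonneg (-m) he'
  refine ⟨((-m) % (e - 1)).toNat, by omega, tr z ((-m) / (e - 1)), pr_tr _ _, ?_⟩
  rw [Int.toNat_of_nonneg hr0, hdeg, hm, tr_tr, tr_tr, Int.emod_def]
  congr 1; ring

theorem hasExactlyNielsenClasses_of_forall_exists_fixedPt_tr (hg : Continuous g)
    (hG : IsLift g G) (hdeg : ∀ z m, G (tr z m) = tr (G z) (m * e)) (he : e ≠ 1)
    (hfix : ∀ j : ℤ, ∃ z, tr (G z) j = z) : HasExactlyNielsenClasses g (e - 1).natAbs := by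
  classical
  choose Z hZ using hfix
  have hZfix : ∀ j, g (pr (Z j)) = pr (Z j) := fun j => by
    conv_rhs => rw [← hZ j, pr_tr, hG.pr_apply]
  have hclass : ∀ i j : ℕ, i < (e - 1).natAbs → j < (e - 1).natAbs →
      NielsenEquiv g (pr (Z i)) (pr (Z j)) → i = j := fun i j hi hj h =>
    Int.natCast_eq_of_dvd_sub_of_lt_natAbs hi hj (dvd_sub_of_nielsenEquiv hG hdeg (hZ i) (hZ j) h)
  refine ⟨(Finset.range (e - 1).natAbs).image fun j : ℕ => pr (Z j), ?_, ?_, ?_, ?_⟩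
  · rw [Finset.card_image_of_injOn, Finset.card_range]
    intro i hi j hj (hij : pr (Z i) = pr (Z j))
    exact hclass i j (by simpa using hi) (by simpa using hj)
      (hij ▸ nielsenEquiv_refl hg (hZfix i))
  · simp only [Finset.mem_image, Finset.mem_range]
    rintro _ ⟨j, -, rfl⟩
    exact hZfix j
  · simp only [Finset.mem_image, Finset.mem_range]
    rintro _ ⟨i, hi, rfl⟩ _ ⟨j, hj, rfl⟩ hne h
    exact hne (by rw [hclass i j hi hj h])
  · intro q hq
    obtain ⟨r, hr, z, rfl, hz⟩ := exists_lt_natAbs_isFixedPt_tr hG hdeg he hq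
    exact ⟨pr (Z r), Finset.mem_image_of_mem _ (Finset.mem_range.mpr hr),
      nielsenEquiv_pr_of_isFixedPt hg (hG.tr_right r) hz (hZ r)⟩

end Classes

/-- If for every `k ≥ 1` every lift of `fᵏ` has a fixed point, then `f` is
complete. -/
theorem stmt_9 (f : Ann → Ann) (hf : Continuous f) (d : ℤ)
    (hdeg : HasDegree f d) (hd : 1 < |d|)
    (hfix : ∀ k : ℕ, 1 ≤ k →
      ∀ F : AnnTil → AnnTil, IsLift (f^[k]) F → ∃ z : AnnTil, F z = z) :
    ∀ k : ℕ, 1 ≤ k →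
      HasExactlyNielsenClasses (f^[k]) (d ^ k - 1).natAbs := by
  obtain ⟨F, hF, hF1⟩ := hdeg
  intro k hk
  have hdk : 1 < |d ^ k| := abs_pow d k ▸ one_lt_pow₀ hd (by omega)
  exact hasExactlyNielsenClasses_of_forall_exists_fixedPt_tr (hf.iterate k) (hF.iterate k)
    (iterate_map_tr (map_tr_of_map_tr_one hF1) k) (fun h => by simp [h] at hdk)
    fun j => hfix k hk _ ((hF.iterate k).tr_right j)
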